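/- For every n ≥ 3, the poset C(Q_{2^n}) of cyclic subgroups of the generalized quaternion group Q_{2^n} has exactly one breaking point, namely the unique subgroup of order 2. -/
import Mathlib

/-- `H` is a breaking point of the poset `C(G)` of cyclic subgroups of `G`:
`H` is a proper nontrivial cyclic subgroup of `G` such that every cyclic
subgroup of `G` is comparable with `H` under inclusion. -/
def IsBreakingPoint {G : Type*} [Group G] (H : Subgroup G) : Prop :=
  IsCyclic ↥H ∧ H ≠ ⊥ ∧ H ≠ ⊤ ∧
    ∀ X : Subgroup G, IsCyclic ↥X → X ≤ H ∨ H ≤ X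

open Subgroup QuaternionGroup

lemma zpowers_isCyclic {G : Type*} [Group G] (g : G) : IsCyclic (zpowers g) := by
  refine ⟨⟨⟨g, mem_zpowers g⟩, ?_⟩⟩
  rintro ⟨x, hx⟩
  obtain ⟨k, hk⟩ := hx
  exact ⟨k, Subtype.ext (by simpa using hk)⟩

lemma cyclic_comm {G : Type*} [Group G] {K : Subgroup G} (hK : IsCyclic K)
    {x y : G} (hx : x ∈ K) (hy : y ∈ K) : x * y = y * x := by
  letI := hK.commGroup
  have := mul_comm (⟨x, hx⟩ : K) ⟨y, hy⟩
  exact congrArg Subtype.val this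

section Quat

variable {m : ℕ}

lemma two_ne_zero_zmod (hm : 2 ≤ m) : (2 : ZMod (2 * m)) ≠ 0 := by
  have : ((2 : ℕ) : ZMod (2 * m)) ≠ 0 := by
    rw [Ne, ZMod.natCast_eq_zero_iff]
    intro h
    exact absurd (Nat.le_of_dvd (by norm_num) h) (by omega)
  exact_mod_cast this

lemma orderOf_a_m (hm : 2 ≤ m) :
    orderOf (a (m : ZMod (2 * m)) : QuaternionGroup m) = 2 := by
  haveI : NeZero m := ⟨by omega⟩
  haveI : Fact (Nat.Prime 2) := ⟨Nat.prime_two⟩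
  refine orderOf_eq_prime ?_ ?_
  · show a (m : ZMod (2 * m)) ^ 2 = 1
    rw [sq, a_mul_a, one_def]
    congr 1
    rw [← Nat.cast_add]
    exact (ZMod.natCast_eq_zero_iff _ _).mpr ⟨1, by omega⟩
  · rw [one_def]
    intro h
    injection h with h'
    have := (ZMod.natCast_eq_zero_iff m (2 * m)).mp h'
    exact absurd (Nat.le_of_dvd (by omega) this) (by omega)

lemma invol_eq (hm : 2 ≤ m) {g : QuaternionGroup m} (hg : orderOf g = 2) :
    g = a (m : ZMod (2 * m)) := by
  haveI : NeZero m := ⟨by omega⟩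
  haveI : NeZero (2 * m) := ⟨by omega⟩
  cases g with
  | xa i => rw [orderOf_xa] at hg; omega
  | a i =>
    have h2 : (a i : QuaternionGroup m) ^ 2 = 1 := by
      rw [← hg]; exact pow_orderOf_eq_one _
    rw [sq, a_mul_a, one_def] at h2
    injection h2 with h'
    have hne : i ≠ 0 := by
      intro h
      rw [h, ← one_def] at hg
      simp at hg
    have hv : (2 * m) ∣ i.val + i.val := by
      have : ((i.val + i.val : ℕ) : ZMod (2 * m)) = 0 := by
        push_cast
        rw [ZMod.natCast_val, ZMod.cast_id]
        exact h'
      exact (ZMod.natCast_eq_zero_iff _ _).mp this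
    have hlt : i.val < 2 * m := ZMod.val_lt i
    have hne' : i.val ≠ 0 := fun h => hne (by rwa [← ZMod.val_eq_zero])
    have : i.val = m := by
      rcases hv with ⟨c, hc⟩
      rcases c with _ | _ | c
      · omega
      · omega
      · exfalso
        have : 4 * m ≤ 2 * m * (c + 1 + 1) := by nlinarith
        omega
    rw [← ZMod.natCast_zmod_val i, this]

lemma noncomm (hm : 2 ≤ m) :
    (xa 0 : QuaternionGroup m) * xa 1 ≠ xa 1 * xa 0 := by
  rw [xa_mul_xa, xa_mul_xa]
  intro h
  injection h with h'
  apply two_ne_zero_zmod hm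
  have : (m : ZMod (2 * m)) + 1 - 0 - ((m : ZMod (2 * m)) + 0 - 1) = 0 := by
    rw [h']; ring
  calc (2 : ZMod (2 * m)) = (m : ZMod (2 * m)) + 1 - 0 - ((m : ZMod (2 * m)) + 0 - 1) := by ring
    _ = 0 := this

end Quat

theorem quaternion_unique_breaking_point (n : ℕ) (hn : 3 ≤ n) :
    (∃! H : Subgroup (QuaternionGroup (2 ^ (n - 2))), IsBreakingPoint H) ∧
    (∀ H : Subgroup (QuaternionGroup (2 ^ (n - 2))), IsBreakingPoint H →
      Nat.card ↥H = 2) := by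
  set m : ℕ := 2 ^ (n - 2) with hm_def
  have hm : 2 ≤ m := by
    have : 1 ≤ n - 2 := by omega
    calc 2 = 2 ^ 1 := rfl
      _ ≤ 2 ^ (n - 2) := Nat.pow_le_pow_right (by norm_num) this
  haveI : NeZero m := ⟨by omega⟩
  haveI : Fact (Nat.Prime 2) := ⟨Nat.prime_two⟩
  set c : QuaternionGroup m := a (m : ZMod (2 * m)) with hc_def
  have hoc : orderOf c = 2 := orderOf_a_m hm
  set H₀ : Subgroup (QuaternionGroup m) := zpowers c with hH₀
  have hcard₀ : Nat.card H₀ = 2 := by rw [hH₀, Nat.card_zpowers, hoc]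
  have hcardG : Nat.card (QuaternionGroup m) = 2 ^ n := by
    rw [Nat.card_eq_fintype_card, QuaternionGroup.card, hm_def]
    show 2 ^ 2 * 2 ^ (n - 2) = 2 ^ n
    rw [← pow_add]
    congr 1
    omega
  -- every nontrivial subgroup contains c
  have key : ∀ X : Subgroup (QuaternionGroup m), X ≠ ⊥ → c ∈ X := by
    intro X hX
    have hdvd : Nat.card X ∣ 2 ^ n := hcardG ▸ Subgroup.card_subgroup_dvd_card X
    have hne1 : Nat.card X ≠ 1 := by
      intro h
      exact hX ((Subgroup.card_eq_one).mp h)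
    have h2 : 2 ∣ Nat.card X := by
      obtain ⟨j, hj, hjx⟩ := (Nat.dvd_prime_pow Nat.prime_two).mp hdvd
      rcases j with _ | j
      · simp [hjx] at hne1
      · rw [hjx, pow_succ]
        exact dvd_mul_left 2 (2 ^ j)
    obtain ⟨x, hx⟩ := exists_prime_orderOf_dvd_card' (G := X) 2 h2
    have hxo : orderOf (x : QuaternionGroup m) = 2 := by rw [Subgroup.orderOf_coe, hx]
    have := invol_eq hm hxo
    rw [← hc_def] at this
    rw [← this]
    exact x.2
  have hbp : IsBreakingPoint H₀ := by
    refine ⟨zpowers_isCyclic c, ?_, ?_, ?_⟩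
    · intro h
      rw [h, Subgroup.card_bot] at hcard₀
      norm_num at hcard₀
    · intro h
      rw [h, Subgroup.card_top, hcardG] at hcard₀
      have : 2 ^ 3 ≤ 2 ^ n := Nat.pow_le_pow_right (by norm_num) hn
      omega
    · intro X _
      rcases eq_or_ne X ⊥ with h | h
      · exact Or.inl (h ▸ bot_le)
      · exact Or.inr ((zpowers_le).mpr (key X h))
  have hcard2 : ∀ H : Subgroup (QuaternionGroup m), IsBreakingPoint H → Nat.card ↥H = 2 := by
    intro H hH
    obtain ⟨hcyc, hbot, htop, hcomp⟩ := hH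
    set X1 : Subgroup (QuaternionGroup m) := zpowers (xa 0 : QuaternionGroup m) with hX1
    set X2 : Subgroup (QuaternionGroup m) := zpowers (xa 1 : QuaternionGroup m) with hX2
    have hc1 : Nat.card X1 = 4 := by rw [hX1, Nat.card_zpowers, orderOf_xa]
    have hc2 : Nat.card X2 = 4 := by rw [hX2, Nat.card_zpowers, orderOf_xa]
    have hnc := noncomm hm
    have m1 : (xa 0 : QuaternionGroup m) ∈ X1 := mem_zpowers _
    have m2 : (xa 1 : QuaternionGroup m) ∈ X2 := mem_zpowers _
    rcases hcomp X1 (zpowers_isCyclic _) with h1 | h1 <;>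
      rcases hcomp X2 (zpowers_isCyclic _) with h2 | h2
    · -- X1 ≤ H and X2 ≤ H : contradiction with cyclic H
      exact absurd (cyclic_comm hcyc (h1 m1) (h2 m2)) hnc
    · -- X1 ≤ H, H ≤ X2
      exact absurd (cyclic_comm (zpowers_isCyclic _) (h2 (h1 m1)) m2) hnc
    · -- H ≤ X1, X2 ≤ H
      exact absurd (cyclic_comm (zpowers_isCyclic _) m1 (h1 (h2 m2))) hnc
    · -- H ≤ X1 and H ≤ X2
      have hdvd : Nat.card H ∣ 4 := hc1 ▸ Subgroup.card_dvd_of_le h1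
      have hne1 : Nat.card H ≠ 1 := fun h => hbot (Subgroup.card_eq_one.mp h)
      obtain ⟨j, hj2, hje⟩ := (Nat.dvd_prime_pow Nat.prime_two).mp
        (show Nat.card H ∣ 2 ^ 2 from hdvd)
      interval_cases j
      · rw [pow_zero] at hje; exact absurd hje hne1
      · rw [hje]; norm_num
      · -- card 4 : H = X1 = X2, contradiction
        exfalso
        have hje4 : Nat.card H = 4 := by rw [hje]; norm_num
        have e1 : H = X1 := Subgroup.eq_of_le_of_card_ge h1 (by omega)
        have e2 : H = X2 := Subgroup.eq_of_le_of_card_ge h2 (by omega)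
        have : (xa 1 : QuaternionGroup m) ∈ X1 := by rw [← e1, e2]; exact m2
        exact hnc (cyclic_comm (zpowers_isCyclic (xa 0 : QuaternionGroup m)) m1 this)
  refine ⟨⟨H₀, hbp, ?_⟩, hcard2⟩
  intro H hH
  have hle : H₀ ≤ H := (zpowers_le).mpr (key H hH.2.1)
  exact (Subgroup.eq_of_le_of_card_ge hle (by rw [hcard₀, hcard2 H hH])).symm
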